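/- Let G be a graph with maximum degree Δ ≥ 2. Suppose S is a set of inner vertices of G^{3/3} such that for each branch vertex v, at most t of the inner vertices adjacent to v in G^{1/3} lie in S. Then the subgraph of G^{3/3} induced on S can be properly coloured with at most 3t colours. -/

import Mathlib

open SimpleGraph

/-- Data for an inner vertex of the `n`-th subdivision: it lies on the subdivided
edge `u w` at distance `i` from `u` (so `1 ≤ i ≤ n-1`). -/
structure SubdivPre {V : Type} (G : SimpleGraph V) (n : ℕ) where
  u : V
  w : V
  i : ℕ
  adj : G.Adj u w
  hi1 : 1 ≤ i
  hi2 : i ≤ n - 1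

/-- `(u,w,i)` and `(w,u,n-i)` describe the same inner vertex. -/
def SubdivRel {V : Type} (G : SimpleGraph V) (n : ℕ) (p q : SubdivPre G n) : Prop :=
  p.u = q.w ∧ p.w = q.u ∧ p.i + q.i = n

/-- The inner vertices of the `n`-th subdivision of `G`. -/
def SubdivInner {V : Type} (G : SimpleGraph V) (n : ℕ) : Type := Quot (SubdivRel G n)

/-- Vertices of the `n`-th subdivision: branch vertices plus inner vertices. -/
def SubdivV {V : Type} (G : SimpleGraph V) (n : ℕ) : Type := V ⊕ SubdivInner G n

def subdivAdj {V : Type} (G : SimpleGraph V) (n : ℕ) : SubdivV G n → SubdivV G n → Prop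
  | Sum.inl _, Sum.inl _ => False
  | Sum.inl a, Sum.inr q => ∃ p : SubdivPre G n, Quot.mk _ p = q ∧
      ((p.u = a ∧ p.i = 1) ∨ (p.w = a ∧ p.i = n - 1))
  | Sum.inr q, Sum.inl a => ∃ p : SubdivPre G n, Quot.mk _ p = q ∧
      ((p.u = a ∧ p.i = 1) ∨ (p.w = a ∧ p.i = n - 1))
  | Sum.inr q, Sum.inr q' => ∃ p p' : SubdivPre G n, Quot.mk _ p = q ∧ Quot.mk _ p' = q' ∧
      p.u = p'.u ∧ p.w = p'.w ∧ (p.i + 1 = p'.i ∨ p'.i + 1 = p.i)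

/-- The `n`-th subdivision `G^{1/n}` of `G`: every edge is replaced by a path of length `n`. -/
def subdivision {V : Type} (G : SimpleGraph V) (n : ℕ) : SimpleGraph (SubdivV G n) where
  Adj x y := x ≠ y ∧ subdivAdj G n x y
  symm := ⟨by
    rintro x y ⟨hne, h⟩
    refine ⟨hne.symm, ?_⟩
    match x, y, h with
    | Sum.inl a, Sum.inr q, h => exact h
    | Sum.inr q, Sum.inl a, h => exact h
    | Sum.inr q, Sum.inr q', ⟨p, p', h1, h2, h3, h4, h5⟩ =>
        exact ⟨p', p, h2, h1, h3.symm, h4.symm, h5.symm⟩⟩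
  loopless := ⟨fun x h => h.1 rfl⟩

/-- The `m`-th power of a graph: join vertices at distance at most `m`. -/
def gpow {α : Type} (H : SimpleGraph α) (m : ℕ) : SimpleGraph α where
  Adj x y := x ≠ y ∧ H.Reachable x y ∧ H.dist x y ≤ m
  symm := ⟨by
    rintro x y ⟨h1, h2, h3⟩
    exact ⟨h1.symm, h2.symm, by rwa [SimpleGraph.dist_comm]⟩⟩
  loopless := ⟨fun x h => h.1 rfl⟩

/-!
Write `q ∈ S` as `e^v` for the edge `e = vw` and view it as an arc `w → v` with head `v`:
every vertex is the head of at most `t` arcs, and two vertices of `S` are adjacent in `G^{3/3}`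
only if their arcs share the head or the head of one is the tail of the other. Numbering the arcs
into each vertex by `0, …, t - 1` splits them into `t` classes, each a partial map
`head ↦ tail` on `V(G)`. The undirected graph of a self-map of a finite set is 2-degenerate,
hence 3-colourable, and pairing the number of an arc with the colour of its head in the graph
of its class is a proper `3t`-colouring.
-/

open Finset Function

namespace SimpleGraph

variable {V : Type*}

theorem colorable_succ_of_forall_exists_card_adj_le [Fintype V] [DecidableEq V]
    (H : SimpleGraph V) [DecidableRel H.Adj] (k : ℕ)
    (h : ∀ s : Finset V, s.Nonempty → ∃ v ∈ s, #{w ∈ s | H.Adj v w} ≤ k) :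
    H.Colorable (k + 1) := by
  suffices ∀ s : Finset V, ∃ f : V → Fin (k + 1), ∀ v ∈ s, ∀ w ∈ s, H.Adj v w → f v ≠ f w by
    obtain ⟨f, hf⟩ := this univ
    exact ⟨Coloring.mk f fun hvw => hf _ (mem_univ _) _ (mem_univ _) hvw⟩
  intro s
  induction s using Finset.strongInduction with | H s ih => ?_
  rcases s.eq_empty_or_nonempty with rfl | hs
  · exact ⟨0, by simp⟩
  obtain ⟨v, hv, hdeg⟩ := h s hs
  obtain ⟨f, hf⟩ := ih (s.erase v) (erase_ssubset hv)
  obtain ⟨c, -, hc⟩ := exists_mem_notMem_of_card_lt_card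
    (s := image f {w ∈ s | H.Adj v w}) (t := univ)
    (by simpa using card_image_le.trans_lt (Nat.lt_succ_of_le hdeg))
  refine ⟨update f v c, fun x hx y hy hxy => ?_⟩
  rcases eq_or_ne x v with rfl | hxv
  · simp only [update_self, update_of_ne hxy.ne.symm]
    exact fun h => hc (mem_image.2 ⟨y, by simp [hy, hxy], h.symm⟩)
  rcases eq_or_ne y v with rfl | hyv
  · simp only [update_self, update_of_ne hxv]
    exact fun h => hc (mem_image.2 ⟨x, by simp [hx, hxy.symm], h⟩)
  simpa [update_of_ne hxv, update_of_ne hyv] using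
    hf x (mem_erase.2 ⟨hxv, hx⟩) y (mem_erase.2 ⟨hyv, hy⟩) hxy

theorem colorable_three_fromRel_apply_eq [Finite V] (g : V → V) :
    (fromRel fun x y => g x = y).Colorable 3 := by
  classical
  have := Fintype.ofFinite V
  refine colorable_succ_of_forall_exists_card_adj_le _ 2 fun s hs => ?_
  -- by pigeonhole some `v ∈ s` has at most one preimage in `s`; its neighbours are that and `g v`
  obtain ⟨v, hv, hfib⟩ := exists_card_fiber_le_of_card_le_mul (s := s) (f := g) (n := 1) hs
    (by simp)
  refine ⟨v, hv, (card_le_card (t := insert (g v) {x ∈ s | g x = v}) fun w hw => ?_).trans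
    ((card_insert_le _ _).trans (by omega))⟩
  simp only [mem_filter, fromRel_adj] at hw
  simp only [mem_insert, mem_filter]
  grind

end SimpleGraph

section Arcs

variable {ι V : Type*}

theorem exists_injective_fiberwise_label [Finite ι] (f : ι → V) (t : ℕ)
    (hf : ∀ v, {e | f e = v}.ncard ≤ t) : ∃ l : ι → Fin t, Injective fun e => (f e, l e) := by
  have (v : V) : Nonempty ({e // f e = v} ↪ Fin t) := by
    have := Fintype.ofFinite {e // f e = v}
    refine Embedding.nonempty_of_card_le ?_
    rw [Fintype.card_fin, ← Nat.card_eq_fintype_card]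
    exact hf v
  let emb (v : V) := (this v).some
  have key (e : ι) (v : V) (hv : f e = v) : emb (f e) ⟨e, rfl⟩ = emb v ⟨e, hv⟩ := by
    subst hv; rfl
  refine ⟨fun e => emb (f e) ⟨e, rfl⟩, fun e e' hee' => ?_⟩
  obtain ⟨hfe, hl⟩ : f e = f e' ∧ emb (f e) ⟨e, rfl⟩ = emb (f e') ⟨e', rfl⟩ := Prod.ext_iff.1 hee'
  rw [key e' (f e) hfe.symm] at hl
  exact congrArg Subtype.val ((emb (f e)).injective hl)

/-- The colour classes of this graph are the directed star forests of the multidigraph with an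
arc `tail e → head e` for each `e : ι`. -/
def arcConflictGraph (head tail : ι → V) : SimpleGraph ι :=
  fromRel fun e e' => head e = head e' ∨ head e = tail e'

theorem arcConflictGraph_colorable [Finite V] [Finite ι] (head tail : ι → V) (t : ℕ)
    (ht : ∀ v, {e | head e = v}.ncard ≤ t) : (arcConflictGraph head tail).Colorable (3 * t) := by
  classical
  obtain ⟨l, hl⟩ := exists_injective_fiberwise_label head t ht
  -- the arcs labelled `j` form the partial map `head e ↦ tail e`, extended by the identity
  let g (j : Fin t) (v : V) : V := if h : ∃ e, head e = v ∧ l e = j then tail h.choose else v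
  have hg (e : ι) : g (l e) (head e) = tail e := by
    have h : ∃ e', head e' = head e ∧ l e' = l e := ⟨e, rfl, rfl⟩
    simp only [g, dif_pos h]
    rw [hl (Prod.ext h.choose_spec.1 h.choose_spec.2)]
  let c (j : Fin t) : V → Fin 3 := (colorable_three_fromRel_apply_eq (g j)).some
  let colour (e : ι) : Fin t × Fin 3 := (l e, c (l e) (head e))
  have hcolour {e e'} (hne : e ≠ e') (hle : l e = l e') (h : head e = head e' ∨ head e = tail e') :
      colour e ≠ colour e' := by
    by_cases hh : head e = head e'
    · exact fun _ => hne (hl (Prod.ext hh hle))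
    have hadj : (fromRel fun x y => g (l e') x = y).Adj (head e') (head e) :=
      (fromRel_adj _ _ _).2 ⟨Ne.symm hh, Or.inl (by rw [hg, h.resolve_left hh])⟩
    intro hc
    have hC : c (l e') (head e) = c (l e') (head e') := by
      simpa only [colour, hle] using congrArg Prod.snd hc
    exact (colorable_three_fromRel_apply_eq _).some.valid hadj hC.symm
  refine (Coloring.mk colour fun {e e'} hadj => ?_).colorable.mono (by simp [mul_comm])
  obtain ⟨hne, h | h⟩ := (fromRel_adj _ _ _).1 hadj
  · by_cases hle : l e = l e'
    · exact hcolour hne hle h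
    · exact fun hc => hle (congrArg Prod.fst hc)
  · by_cases hle : l e' = l e
    · exact (hcolour (Ne.symm hne) hle h).symm
    · exact fun hc => hle (congrArg Prod.fst hc).symm

end Arcs

theorem SimpleGraph.Walk.exists_adj_chain_of_length_le_three {W : Type*} {H : SimpleGraph W}
    {a b : W} (p : H.Walk a b) (h : p.length ≤ 3) :
    a = b ∨ H.Adj a b ∨ (∃ x, H.Adj a x ∧ H.Adj x b) ∨
      ∃ x y, H.Adj a x ∧ H.Adj x y ∧ H.Adj y b := by
  match p with
  | .nil => exact .inl rfl
  | .cons h₁ .nil => exact .inr (.inl h₁)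
  | .cons h₁ (.cons h₂ .nil) => exact .inr (.inr (.inl ⟨_, h₁, h₂⟩))
  | .cons h₁ (.cons h₂ (.cons h₃ .nil)) => exact .inr (.inr (.inr ⟨_, _, h₁, h₂, h₃⟩))
  | .cons _ (.cons _ (.cons _ (.cons _ _))) => simp only [Walk.length_cons] at h; omega

section Subdivision

variable {V : Type} {G : SimpleGraph V}

namespace SubdivPre

theorem i_eq_one_or_two (p : SubdivPre G 3) : p.i = 1 ∨ p.i = 2 := by
  have := p.hi1; have := p.hi2; omega

end SubdivPre

namespace SubdivInner

/-- The inner vertex `e^a` of the edge `e = ab`. -/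
def mk (a b : V) (hab : G.Adj a b) : SubdivInner G 3 :=
  Quot.mk _ ⟨a, b, 1, hab, le_rfl, by norm_num⟩

/-- The branch vertex `v` with `q = e^v`. -/
def head : SubdivInner G 3 → V :=
  Quot.lift (fun p => if p.i = 1 then p.u else p.w) <| by
    rintro p q ⟨hpq, hqp, hi⟩
    rcases p.i_eq_one_or_two with hp | hp <;> rcases q.i_eq_one_or_two with hq | hq <;>
      simp [*] at hi ⊢

def tail : SubdivInner G 3 → V :=
  Quot.lift (fun p => if p.i = 1 then p.w else p.u) <| by
    rintro p q ⟨hpq, hqp, hi⟩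
    rcases p.i_eq_one_or_two with hp | hp <;> rcases q.i_eq_one_or_two with hq | hq <;>
      simp [*] at hi ⊢

theorem adj_head_tail (q : SubdivInner G 3) : G.Adj q.head q.tail := by
  induction q using Quot.ind with | mk p => ?_
  rcases p.i_eq_one_or_two with hp | hp <;> simp [head, tail, hp, p.adj, p.adj.symm]

theorem mk_head_tail (q : SubdivInner G 3) : mk q.head q.tail q.adj_head_tail = q := by
  induction q using Quot.ind with | mk p => ?_
  obtain ⟨u, w, i, huw, hi1, hi2⟩ := p
  rcases (show i = 1 ∨ i = 2 by omega) with rfl | rfl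
  · rfl
  · exact Quot.sound ⟨rfl, rfl, rfl⟩

theorem ext {q q' : SubdivInner G 3} (hh : q.head = q'.head) (ht : q.tail = q'.tail) : q = q' := by
  rw [← mk_head_tail q, ← mk_head_tail q']
  simp only [hh, ht]

end SubdivInner

open SubdivInner

theorem subdivision_three_adj_inl_inr {a : V} {q : SubdivInner G 3} :
    (subdivision G 3).Adj (.inl a) (.inr q) ↔ q.head = a := by
  refine ⟨?_, fun h => ⟨Sum.inl_ne_inr, _, mk_head_tail q, Or.inl ⟨h, rfl⟩⟩⟩
  rintro ⟨-, p, rfl, ⟨rfl, hp⟩ | ⟨rfl, hp⟩⟩ <;> simp [head, hp]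

theorem subdivision_three_adj_inr_inl {a : V} {q : SubdivInner G 3} :
    (subdivision G 3).Adj (.inr q) (.inl a) ↔ q.head = a :=
  (subdivision G 3).adj_comm _ _ |>.trans subdivision_three_adj_inl_inr

theorem subdivision_three_not_adj_inl_inl (a b : V) : ¬(subdivision G 3).Adj (.inl a) (.inl b) :=
  fun h => h.2

theorem subdivision_three_adj_inr_inr {q q' : SubdivInner G 3}
    (h : (subdivision G 3).Adj (.inr q) (.inr q')) : q.head = q'.tail ∧ q.tail = q'.head := by
  obtain ⟨-, p, p', rfl, rfl, hu, hw, hi⟩ := h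
  rcases p.i_eq_one_or_two with hp | hp <;> rcases p'.i_eq_one_or_two with hp' | hp' <;>
    simp [head, tail, hp, hp', hu, hw] at hi ⊢

theorem arcConflictGraph_adj_of_gpow_subdivision_three_adj {q q' : SubdivInner G 3}
    (h : (gpow (subdivision G 3) 3).Adj (.inr q) (.inr q')) :
    (arcConflictGraph head tail).Adj q q' := by
  obtain ⟨hne, hr, hd⟩ := h
  obtain ⟨w, hw⟩ := hr.exists_walk_length_eq_dist
  refine (fromRel_adj _ _ _).2 ⟨fun h => hne (congrArg _ h), ?_⟩
  rcases w.exists_adj_chain_of_length_le_three (hw ▸ hd) with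
    h | h | ⟨x, h₁, h₂⟩ | ⟨x, y, h₁, h₂, h₃⟩
  · exact absurd h hne
  · have := subdivision_three_adj_inr_inr h
    tauto
  · rcases x with a | r
    · rw [subdivision_three_adj_inr_inl] at h₁
      rw [subdivision_three_adj_inl_inr] at h₂
      grind
    · have := subdivision_three_adj_inr_inr h₁
      have := subdivision_three_adj_inr_inr h₂
      grind
  · rcases x with a | r <;> rcases y with b | r'
    · exact absurd h₂ (subdivision_three_not_adj_inl_inl a b)
    · rw [subdivision_three_adj_inr_inl] at h₁
      rw [subdivision_three_adj_inl_inr] at h₂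
      have := subdivision_three_adj_inr_inr h₃
      grind
    · rw [subdivision_three_adj_inr_inl] at h₂
      rw [subdivision_three_adj_inl_inr] at h₃
      have := subdivision_three_adj_inr_inr h₁
      grind
    · have h₁ := subdivision_three_adj_inr_inr h₁
      have h₂ := subdivision_three_adj_inr_inr h₂
      have h₃ := subdivision_three_adj_inr_inr h₃
      have : r' = q := SubdivInner.ext (by grind) (by grind)
      grind

instance [Finite V] : Finite (SubdivInner G 3) :=
  Finite.of_surjective (fun e : {e : V × V // G.Adj e.1 e.2} => SubdivInner.mk e.1.1 e.1.2 e.2)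
    fun q => ⟨⟨(q.head, q.tail), q.adj_head_tail⟩, mk_head_tail q⟩

end Subdivision

theorem recolouring_with_three_t_colours_general {V : Type} [Fintype V] (G : SimpleGraph V)
    (t : ℕ) (S : Set (SubdivV G 3))
    (hinner : ∀ x ∈ S, ∃ q : SubdivInner G 3, x = Sum.inr q)
    (ht : ∀ v : V,
      {q : SubdivInner G 3 | Sum.inr q ∈ S ∧
        (subdivision G 3).Adj (Sum.inl v) (Sum.inr q)}.ncard ≤ t) :
    ((gpow (subdivision G 3) 3).induce S).Colorable (3 * t) := by
  let E := {q : SubdivInner G 3 // Sum.inr q ∈ S}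
  have hE (v : V) : {e : E | e.1.head = v}.ncard ≤ t := by
    rw [← Set.ncard_image_of_injective _ Subtype.val_injective]
    convert ht v using 2
    ext q
    simp [E, subdivision_three_adj_inl_inr, and_comm]
  refine (arcConflictGraph_colorable (fun e : E => e.1.head) (fun e => e.1.tail) t hE).of_hom ?_
  choose q hq using hinner
  refine ⟨fun s => ⟨q s s.2, hq s s.2 ▸ s.2⟩, fun {s s'} hss' => ?_⟩
  have hadj := (fromRel_adj _ _ _).1 <| arcConflictGraph_adj_of_gpow_subdivision_three_adj <|
    show (gpow (subdivision G 3) 3).Adj (.inr (q s s.2)) (.inr (q s' s'.2)) from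
      hq s s.2 ▸ hq s' s'.2 ▸ hss'
  exact (fromRel_adj _ _ _).2 ⟨fun h => hadj.1 (congrArg Subtype.val h), hadj.2⟩

/-- If `S` is a set of inner vertices of `G^{3/3}` such that every branch vertex `v` has
at most `t` of its adjacent (in `G^{1/3}`) inner vertices in `S`, then the subgraph of
`G^{3/3}` induced on `S` is properly `3t`-colourable. -/
theorem recolouring_with_three_t_colours {V : Type} [Fintype V] (G : SimpleGraph V)
    [DecidableRel G.Adj] (hΔ : 2 ≤ G.maxDegree) (t : ℕ) (S : Set (SubdivV G 3))
    (hinner : ∀ x ∈ S, ∃ q : SubdivInner G 3, x = Sum.inr q)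
    (ht : ∀ v : V,
      {q : SubdivInner G 3 | Sum.inr q ∈ S ∧
        (subdivision G 3).Adj (Sum.inl v) (Sum.inr q)}.ncard ≤ t) :
    ((gpow (subdivision G 3) 3).induce S).Colorable (3 * t) :=
  recolouring_with_three_t_colours_general G t S hinner ht
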